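/- The product on the Deligne path complex makes it a strict differential graded algebra: (i) it maps P^r × P^s into P^{r+s}; (ii) it satisfies the Leibniz rule d(w · w̃) = (dw) · w̃ + (−1)^r w · (dw̃) for w ∈ P^r, w̃ ∈ P^s; (iii) it is associative whenever the product on V^• is associative; and (iv) it is graded-commutative, w · w̃ = (−1)^{rs} w̃ · w for w ∈ P^r, w̃ ∈ P^s, whenever the product on V^• is graded-commutative (uv = (−1)^{rs}vu for u ∈ V^r, v ∈ V^s). -/

import Mathlib

/-!
Setup: `(V, d)` is a cochain complex of `ℚ`-vector spaces indexed by `ℤ`, with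
subcomplexes `I, F ⊆ V`.  We model the graded pieces as submodules `V n, I n, F n`
of one ambient `ℚ`-vector space `A`, with one differential `d : A →ₗ[ℚ] A` that maps
`V n` into `V (n+1)` (and similarly for `I`, `F`).

Polynomials `ℚ[x] ⊗ V` with coefficients in `A` are modelled as finitely supported
functions `ℕ →₀ A`, where `p i` is the coefficient of `xⁱ`.
-/

variable {A : Type*} [AddCommGroup A] [Module ℚ A]

/-- Evaluation at `ε : ℚ` of a polynomial `∑ i, xⁱ ⊗ vᵢ`. -/
noncomputable def evalAt (ε : ℚ) : (ℕ →₀ A) →ₗ[ℚ] A :=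
  Finsupp.lsum ℚ fun i : ℕ => ε ^ i • (LinearMap.id : A →ₗ[ℚ] A)

/-- Formal derivative `∂ₓ` in the polynomial variable `x`. -/
noncomputable def polyDeriv : (ℕ →₀ A) →ₗ[ℚ] (ℕ →₀ A) :=
  Finsupp.lsum ℚ fun i : ℕ =>
    (Finsupp.lsingle (R := ℚ) (i - 1)).comp ((i : ℚ) • (LinearMap.id : A →ₗ[ℚ] A))

/-- Apply a linear map `d` to all coefficients (this is `d_V`). -/
noncomputable def coeffMap (d : A →ₗ[ℚ] A) : (ℕ →₀ A) →ₗ[ℚ] (ℕ →₀ A) :=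
  Finsupp.mapRange.linearMap d

/-- `∫₀¹ q := ∑ i, vᵢ / (i+1)`. -/
noncomputable def int01 : (ℕ →₀ A) →ₗ[ℚ] A :=
  Finsupp.lsum ℚ fun i : ℕ => ((i : ℚ) + 1)⁻¹ • (LinearMap.id : A →ₗ[ℚ] A)

/-- `∫₀ˣ q := ∑ i, x^(i+1)/(i+1) ⊗ vᵢ`. -/
noncomputable def int0x : (ℕ →₀ A) →ₗ[ℚ] (ℕ →₀ A) :=
  Finsupp.lsum ℚ fun i : ℕ =>
    (Finsupp.lsingle (R := ℚ) (i + 1)).comp (((i : ℚ) + 1)⁻¹ • (LinearMap.id : A →ₗ[ℚ] A))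

/-- Membership in degree `n` of the Deligne cone complex `Cⁿ = Iⁿ ⊕ Fⁿ ⊕ V^(n-1)`. -/
def MemC (I F V : ℤ → Submodule ℚ A) (n : ℤ) (x : A × A × A) : Prop :=
  x.1 ∈ I n ∧ x.2.1 ∈ F n ∧ x.2.2 ∈ V (n - 1)

/-- Membership in degree `n` of the Deligne path complex `Pⁿ`: a pair `(p, q)` with
`p ∈ ℚ[x] ⊗ Vⁿ`, `q ∈ ℚ[x] ⊗ V^(n-1)`, `p(0) ∈ Iⁿ` and `p(1) ∈ Fⁿ`. -/
def MemP (I F V : ℤ → Submodule ℚ A) (n : ℤ) (w : (ℕ →₀ A) × (ℕ →₀ A)) : Prop :=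
  (∀ i, w.1 i ∈ V n) ∧ (∀ i, w.2 i ∈ V (n - 1)) ∧
    evalAt 0 w.1 ∈ I n ∧ evalAt 1 w.1 ∈ F n

/-- Differential of the cone complex: `d (a, b, c) = (d a, d b, b - a - d c)`. -/
noncomputable def dCone (d : A →ₗ[ℚ] A) (x : A × A × A) : A × A × A :=
  (d x.1, d x.2.1, x.2.1 - x.1 - d x.2.2)

/-- Differential of the path complex: `d (p, q) = (d_V p, ∂ₓ p - d_V q)`. -/
noncomputable def dPath (d : A →ₗ[ℚ] A) (w : (ℕ →₀ A) × (ℕ →₀ A)) : (ℕ →₀ A) × (ℕ →₀ A) :=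
  (coeffMap d w.1, polyDeriv w.1 - coeffMap d w.2)

/-- The evaluation map `ev (p, q) = (p(0), p(1), ∫₀¹ q)`. -/
noncomputable def evMap : (ℕ →₀ A) × (ℕ →₀ A) → A × A × A :=
  fun w => (evalAt 0 w.1, evalAt 1 w.1, int01 w.2)

/-- The splitting `s (a, b, c) = ((1-x) ⊗ a + x ⊗ b, 1 ⊗ c)`. -/
noncomputable def sMap : A × A × A → (ℕ →₀ A) × (ℕ →₀ A) :=
  fun x => (Finsupp.single 0 x.1 + Finsupp.single 1 (x.2.1 - x.1), Finsupp.single 0 x.2.2)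

/-- Beilinson's product `∪_α` on the Deligne cone complex; `r` is the (cohomological)
degree of the first factor.  `μ` is the graded product of the underlying complex `V`. -/
noncomputable def cup (μ : A →ₗ[ℚ] A →ₗ[ℚ] A) (α : ℚ) (r : ℤ) (x y : A × A × A) :
    A × A × A :=
  (μ x.1 y.1, μ x.2.1 y.2.1,
    ((1 - α) * (-1 : ℚ) ^ r) • μ x.1 y.2.2 + (α * (-1 : ℚ) ^ r) • μ x.2.1 y.2.2 +
      α • μ x.2.2 y.1 + (1 - α) • μ x.2.2 y.2.1)

/-- Product of two coefficient polynomials (`ℚ[x] ⊗ V`-elements): polynomials in `x` are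
multiplied and the coefficients are multiplied using `μ`. -/
noncomputable def polyMul (μ : A →ₗ[ℚ] A →ₗ[ℚ] A) (p q : ℕ →₀ A) : ℕ →₀ A :=
  p.sum fun i a => q.sum fun j b => Finsupp.single (i + j) (μ a b)

/-- The product on the Deligne path complex, where the first factor has degree `r`:
`(p, q) · (p̃, q̃) = (p p̃, (-1)^r p q̃ + q p̃)`. -/
noncomputable def mulP (μ : A →ₗ[ℚ] A →ₗ[ℚ] A) (r : ℤ) (w w' : (ℕ →₀ A) × (ℕ →₀ A)) :
    (ℕ →₀ A) × (ℕ →₀ A) :=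
  (polyMul μ w.1 w'.1, ((-1 : ℚ) ^ r) • polyMul μ w.1 w'.2 + polyMul μ w.2 w'.1)

/-!
The product on `P` is polynomial multiplication in `x` tensored with `μ`, with the sign
`(-1)^r` on the `dx`-part. Evaluation at a point is multiplicative and `∂ₓ` is a derivation,
which for bilinear maps only has to be checked on monomials `xⁱ ⊗ a`, while `d_V` satisfies
the graded Leibniz rule coefficientwise. Expanding `mulP` bilinearly, the four properties
reduce to these identities together with `(-1)^r (-1)^r = 1`.
-/

section NegOnePow

variable {K : Type*} [DivisionRing K]

theorem neg_one_zpow_add (m n : ℤ) : (-1 : K) ^ (m + n) = (-1) ^ m * (-1) ^ n :=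
  zpow_add₀ (neg_ne_zero.mpr one_ne_zero) m n

theorem neg_one_zpow_sub (m n : ℤ) : (-1 : K) ^ (m - n) = (-1) ^ m * (-1) ^ n := by
  rw [sub_eq_add_neg, neg_one_zpow_add, zpow_neg, ← inv_zpow, inv_neg_one]

theorem neg_one_zpow_mul_self (n : ℤ) : (-1 : K) ^ n * (-1) ^ n = 1 := by
  rw [← neg_one_zpow_add, ← two_mul, zpow_mul]
  norm_num

end NegOnePow

namespace Finsupp

theorem lhom_ext₂ {R α β M N P : Type*} [CommSemiring R] [AddCommMonoid M] [Module R M]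
    [AddCommMonoid N] [Module R N] [AddCommMonoid P] [Module R P]
    ⦃φ ψ : (α →₀ M) →ₗ[R] (β →₀ N) →ₗ[R] P⦄
    (h : ∀ i a j b, φ (single i a) (single j b) = ψ (single i a) (single j b)) : φ = ψ :=
  lhom_ext fun i a => lhom_ext fun j b => h i a j b

end Finsupp

section PolyMul

variable (μ : A →ₗ[ℚ] A →ₗ[ℚ] A)

noncomputable def polyMulₗ : (ℕ →₀ A) →ₗ[ℚ] (ℕ →₀ A) →ₗ[ℚ] (ℕ →₀ A) :=
  Finsupp.lsum ℚ fun i =>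
    (Finsupp.lsum ℚ).toLinearMap ∘ₗ LinearMap.pi fun j => μ.compr₂ (Finsupp.lsingle (i + j))

theorem polyMulₗ_apply (p q : ℕ →₀ A) : polyMulₗ μ p q = polyMul μ p q := by
  simp [polyMulₗ, polyMul, Finsupp.sum]

theorem polyMul_add_left (p p' q : ℕ →₀ A) :
    polyMul μ (p + p') q = polyMul μ p q + polyMul μ p' q := by
  simpa only [polyMulₗ_apply] using LinearMap.map_add₂ (polyMulₗ μ) p p' q

theorem polyMul_add_right (p q q' : ℕ →₀ A) :
    polyMul μ p (q + q') = polyMul μ p q + polyMul μ p q' := by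
  simpa only [polyMulₗ_apply] using (polyMulₗ μ p).map_add q q'

theorem polyMul_sub_left (p p' q : ℕ →₀ A) :
    polyMul μ (p - p') q = polyMul μ p q - polyMul μ p' q := by
  simpa only [polyMulₗ_apply] using LinearMap.map_sub₂ (polyMulₗ μ) p p' q

theorem polyMul_sub_right (p q q' : ℕ →₀ A) :
    polyMul μ p (q - q') = polyMul μ p q - polyMul μ p q' := by
  simpa only [polyMulₗ_apply] using (polyMulₗ μ p).map_sub q q'

theorem polyMul_smul_left (c : ℚ) (p q : ℕ →₀ A) :
    polyMul μ (c • p) q = c • polyMul μ p q := by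
  simpa only [polyMulₗ_apply] using LinearMap.map_smul₂ (polyMulₗ μ) c p q

theorem polyMul_smul_right (c : ℚ) (p q : ℕ →₀ A) :
    polyMul μ p (c • q) = c • polyMul μ p q := by
  simpa only [polyMulₗ_apply] using (polyMulₗ μ p).map_smul c q

theorem polyMul_single_single (i j : ℕ) (a b : A) :
    polyMul μ (Finsupp.single i a) (Finsupp.single j b) = Finsupp.single (i + j) (μ a b) := by
  simp [polyMul]

theorem polyDeriv_single (k : ℕ) (a : A) :
    polyDeriv (Finsupp.single k a) = Finsupp.single (k - 1) ((k : ℚ) • a) := by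
  simp [polyDeriv]

theorem coeffMap_single (d : A →ₗ[ℚ] A) (k : ℕ) (a : A) :
    coeffMap d (Finsupp.single k a) = Finsupp.single k (d a) := by
  simp [coeffMap]

theorem evalAt_polyMul (ε : ℚ) (p q : ℕ →₀ A) :
    evalAt ε (polyMul μ p q) = μ (evalAt ε p) (evalAt ε q) := by
  have h : (polyMulₗ μ).compr₂ (evalAt ε) = μ.compl₁₂ (evalAt ε) (evalAt ε) :=
    Finsupp.lhom_ext₂ fun i a j b => by
      simp [polyMulₗ_apply, polyMul_single_single, evalAt, pow_add, mul_smul, smul_comm (ε ^ j)]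
  simpa [polyMulₗ_apply] using LinearMap.congr_fun₂ h p q

theorem polyDeriv_polyMul (p q : ℕ →₀ A) :
    polyDeriv (polyMul μ p q) = polyMul μ (polyDeriv p) q + polyMul μ p (polyDeriv q) := by
  have h : (polyMulₗ μ).compr₂ polyDeriv =
      (polyMulₗ μ).compl₁₂ polyDeriv LinearMap.id +
        (polyMulₗ μ).compl₁₂ LinearMap.id polyDeriv := by
    refine Finsupp.lhom_ext₂ fun i a j b => ?_
    simp only [LinearMap.compr₂_apply, LinearMap.add_apply, LinearMap.compl₁₂_apply,
      LinearMap.id_apply, polyMulₗ_apply, polyMul_single_single, polyDeriv_single,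
      map_smul, LinearMap.smul_apply]
    rcases i with _ | i
    · simp
    rcases j with _ | j
    · simp
    simp only [Nat.add_sub_cancel, show i + 1 + (j + 1) - 1 = i + (j + 1) by omega,
      show i + 1 + j = i + (j + 1) by omega, ← Finsupp.single_add, ← add_smul]
    push_cast
    ring_nf
  simpa only [LinearMap.compr₂_apply, LinearMap.add_apply, LinearMap.compl₁₂_apply,
    LinearMap.id_apply, polyMulₗ_apply] using LinearMap.congr_fun₂ h p q

theorem polyMul_assoc (hassoc : ∀ a b c : A, μ (μ a b) c = μ a (μ b c)) (p q r : ℕ →₀ A) :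
    polyMul μ (polyMul μ p q) r = polyMul μ p (polyMul μ q r) := by
  simp only [← polyMulₗ_apply]
  induction p using Finsupp.induction_linear with
  | zero => simp
  | add f g hf hg => simp [hf, hg]
  | single i a =>
    induction q using Finsupp.induction_linear with
    | zero => simp
    | add f g hf hg => simp [hf, hg]
    | single j b =>
      induction r using Finsupp.induction_linear with
      | zero => simp
      | add f g hf hg => simp [hf, hg]
      | single k c => simp only [polyMulₗ_apply, polyMul_single_single, hassoc, add_assoc]

theorem polyMul_apply_mem (W : Submodule ℚ A) (p q : ℕ →₀ A)
    (h : ∀ i j, μ (p i) (q j) ∈ W) (k : ℕ) : polyMul μ p q k ∈ W := by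
  simp only [polyMul, Finsupp.sum_apply, Finsupp.single_apply]
  refine Submodule.sum_mem _ fun i _ => Submodule.sum_mem _ fun j _ => ?_
  dsimp only
  split_ifs
  exacts [h i j, W.zero_mem]

theorem coeffMap_polyMul (d : A →ₗ[ℚ] A) (c : ℚ) (W : Submodule ℚ A)
    (hLeib : ∀ u ∈ W, ∀ v, d (μ u v) = μ (d u) v + c • μ u (d v))
    (p q : ℕ →₀ A) (hp : ∀ i, p i ∈ W) :
    coeffMap d (polyMul μ p q) = polyMul μ (coeffMap d p) q + c • polyMul μ p (coeffMap d q) := by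
  have hcoeff : ∀ f : ℕ →₀ A, coeffMap d f = Finsupp.mapRange d d.map_zero f := fun _ => rfl
  unfold polyMul
  rw [map_finsuppSum, hcoeff p, Finsupp.sum_mapRange_index (by simp), Finsupp.smul_sum,
    ← Finsupp.sum_add]
  refine Finset.sum_congr rfl fun i _ => ?_
  dsimp only
  rw [map_finsuppSum, hcoeff q, Finsupp.sum_mapRange_index (by simp), Finsupp.smul_sum,
    ← Finsupp.sum_add]
  refine Finset.sum_congr rfl fun j _ => ?_
  dsimp only
  rw [coeffMap_single, hLeib (p i) (hp i) (q j), Finsupp.single_add, Finsupp.smul_single]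

theorem polyMul_comm (c : ℚ) (W W' : Submodule ℚ A)
    (hcomm : ∀ u ∈ W, ∀ v ∈ W', μ u v = c • μ v u)
    (p q : ℕ →₀ A) (hp : ∀ i, p i ∈ W) (hq : ∀ j, q j ∈ W') :
    polyMul μ p q = c • polyMul μ q p := by
  unfold polyMul
  rw [Finsupp.sum_comm q p, Finsupp.smul_sum]
  refine Finset.sum_congr rfl fun i _ => ?_
  dsimp only
  rw [Finsupp.smul_sum]
  refine Finset.sum_congr rfl fun j _ => ?_
  dsimp only
  rw [hcomm (p i) (hp i) (q j) (hq j), Finsupp.smul_single, add_comm i j]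

theorem memP_mulP {V I F : ℤ → Submodule ℚ A}
    (hgrade : ∀ r s : ℤ, ∀ a ∈ V r, ∀ b ∈ V s, μ a b ∈ V (r + s))
    (hgradeI : ∀ r s : ℤ, ∀ a ∈ I r, ∀ b ∈ I s, μ a b ∈ I (r + s))
    (hgradeF : ∀ r s : ℤ, ∀ a ∈ F r, ∀ b ∈ F s, μ a b ∈ F (r + s))
    {r s : ℤ} {w w' : (ℕ →₀ A) × (ℕ →₀ A)} (hw : MemP I F V r w) (hw' : MemP I F V s w') :
    MemP I F V (r + s) (mulP μ r w w') := by
  obtain ⟨hp, hq, hI, hF⟩ := hw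
  obtain ⟨hp', hq', hI', hF'⟩ := hw'
  refine ⟨polyMul_apply_mem μ _ _ _ fun i j => hgrade r s _ (hp i) _ (hp' j),
    fun k => add_mem (Submodule.smul_mem _ _ ?_) ?_, ?_, ?_⟩
  · rw [add_sub_assoc]
    exact polyMul_apply_mem μ _ _ _ (fun i j => hgrade r (s - 1) _ (hp i) _ (hq' j)) k
  · rw [← sub_add_eq_add_sub]
    exact polyMul_apply_mem μ _ _ _ (fun i j => hgrade (r - 1) s _ (hq i) _ (hp' j)) k
  · simpa only [mulP, evalAt_polyMul] using hgradeI r s _ hI _ hI'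
  · simpa only [mulP, evalAt_polyMul] using hgradeF r s _ hF _ hF'

theorem dPath_mulP {V : ℤ → Submodule ℚ A} {d : A →ₗ[ℚ] A}
    (hLeib : ∀ r : ℤ, ∀ u ∈ V r, ∀ v, d (μ u v) = μ (d u) v + ((-1 : ℚ) ^ r) • μ u (d v))
    {r : ℤ} {w : (ℕ →₀ A) × (ℕ →₀ A)} (hp : ∀ i, w.1 i ∈ V r) (hq : ∀ i, w.2 i ∈ V (r - 1))
    (w' : (ℕ →₀ A) × (ℕ →₀ A)) :
    dPath d (mulP μ r w w') =
      mulP μ (r + 1) (dPath d w) w' + ((-1 : ℚ) ^ r) • mulP μ r w (dPath d w') := by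
  obtain ⟨p, q⟩ := w
  obtain ⟨p', q'⟩ := w'
  have hsucc : (-1 : ℚ) ^ (r + 1) = -(-1) ^ r := by rw [neg_one_zpow_add, zpow_one, mul_neg_one]
  have hpred : (-1 : ℚ) ^ (r - 1) = -(-1) ^ r := by rw [neg_one_zpow_sub, zpow_one, mul_neg_one]
  refine Prod.ext ?_ ?_
  · simpa [mulP, dPath, hsucc] using coeffMap_polyMul μ d _ _ (hLeib r) p p' hp
  · simp only [mulP, dPath, Prod.snd_add, Prod.smul_snd, map_add, map_smul,
      coeffMap_polyMul μ d _ _ (hLeib r) p q' hp,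
      coeffMap_polyMul μ d _ _ (hLeib (r - 1)) q p' hq, polyDeriv_polyMul, polyMul_sub_left,
      polyMul_sub_right, hsucc, hpred, smul_add, smul_sub, smul_smul, neg_one_zpow_mul_self,
      one_smul, neg_smul]
    abel

theorem mulP_assoc (hassoc : ∀ a b c : A, μ (μ a b) c = μ a (μ b c)) (r s : ℤ)
    (w w' w'' : (ℕ →₀ A) × (ℕ →₀ A)) :
    mulP μ (r + s) (mulP μ r w w') w'' = mulP μ r w (mulP μ s w' w'') := by
  refine Prod.ext (polyMul_assoc μ hassoc _ _ _) ?_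
  simp only [mulP, neg_one_zpow_add, polyMul_add_left, polyMul_add_right, polyMul_smul_left,
    polyMul_smul_right, polyMul_assoc μ hassoc, smul_add, smul_smul]
  abel

theorem mulP_comm {V : ℤ → Submodule ℚ A}
    (hcomm : ∀ r s : ℤ, ∀ u ∈ V r, ∀ v ∈ V s, μ u v = ((-1 : ℚ) ^ (r * s)) • μ v u)
    {r s : ℤ} {w w' : (ℕ →₀ A) × (ℕ →₀ A)}
    (hp : ∀ i, w.1 i ∈ V r) (hq : ∀ i, w.2 i ∈ V (r - 1))
    (hp' : ∀ i, w'.1 i ∈ V s) (hq' : ∀ i, w'.2 i ∈ V (s - 1)) :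
    mulP μ r w w' = ((-1 : ℚ) ^ (r * s)) • mulP μ s w' w := by
  have hsign₁ : (-1 : ℚ) ^ r * (-1) ^ (r * (s - 1)) = (-1) ^ (r * s) := by
    rw [← neg_one_zpow_add]; ring_nf
  have hsign₂ : (-1 : ℚ) ^ ((r - 1) * s) = (-1) ^ (r * s) * (-1) ^ s := by
    rw [← neg_one_zpow_sub]; ring_nf
  refine Prod.ext (polyMul_comm μ _ _ _ (hcomm r s) _ _ hp hp') ?_
  simp only [mulP, Prod.smul_snd, polyMul_comm μ _ _ _ (hcomm r (s - 1)) _ _ hp hq',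
    polyMul_comm μ _ _ _ (hcomm (r - 1) s) _ _ hq hp', smul_add, smul_smul, hsign₁, hsign₂]
  exact add_comm _ _

end PolyMul

theorem mulP_strict_dga_general
    (V I F : ℤ → Submodule ℚ A) (d : A →ₗ[ℚ] A) (μ : A →ₗ[ℚ] A →ₗ[ℚ] A)
    (hgrade : ∀ (r s : ℤ), ∀ a ∈ V r, ∀ b ∈ V s, μ a b ∈ V (r + s))
    (hgradeI : ∀ (r s : ℤ), ∀ a ∈ I r, ∀ b ∈ I s, μ a b ∈ I (r + s))
    (hgradeF : ∀ (r s : ℤ), ∀ a ∈ F r, ∀ b ∈ F s, μ a b ∈ F (r + s))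
    (hLeib : ∀ (r : ℤ), ∀ u ∈ V r, ∀ v : A,
      d (μ u v) = μ (d u) v + ((-1 : ℚ) ^ r) • μ u (d v)) :
    -- (i) the product maps `P^r × P^s` into `P^(r+s)`
    (∀ (r s : ℤ) (w w' : (ℕ →₀ A) × (ℕ →₀ A)),
      MemP I F V r w → MemP I F V s w' → MemP I F V (r + s) (mulP μ r w w')) ∧
    -- (ii) Leibniz rule
    (∀ (r s : ℤ) (w w' : (ℕ →₀ A) × (ℕ →₀ A)),
      MemP I F V r w → MemP I F V s w' →
      dPath d (mulP μ r w w') =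
        mulP μ (r + 1) (dPath d w) w' + ((-1 : ℚ) ^ r) • mulP μ r w (dPath d w')) ∧
    -- (iii) associativity, assuming the product on `V` is associative
    ((∀ a b c : A, μ (μ a b) c = μ a (μ b c)) →
      ∀ (r s t : ℤ) (w w' w'' : (ℕ →₀ A) × (ℕ →₀ A)),
        MemP I F V r w → MemP I F V s w' → MemP I F V t w'' →
        mulP μ (r + s) (mulP μ r w w') w'' = mulP μ r w (mulP μ s w' w'')) ∧
    -- (iv) graded-commutativity, assuming the product on `V` is graded-commutative
    ((∀ (r s : ℤ), ∀ u ∈ V r, ∀ v ∈ V s, μ u v = ((-1 : ℚ) ^ (r * s)) • μ v u) →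
      ∀ (r s : ℤ) (w w' : (ℕ →₀ A) × (ℕ →₀ A)),
        MemP I F V r w → MemP I F V s w' →
        mulP μ r w w' = ((-1 : ℚ) ^ (r * s)) • mulP μ s w' w) :=
  ⟨fun _ _ _ _ hw hw' => memP_mulP μ hgrade hgradeI hgradeF hw hw',
    fun _ _ _ w' hw _ => dPath_mulP μ hLeib hw.1 hw.2.1 w',
    fun hassoc r s _ w w' w'' _ _ _ => mulP_assoc μ hassoc r s w w' w'',
    fun hcomm _ _ _ _ hw hw' => mulP_comm μ hcomm hw.1 hw.2.1 hw'.1 hw'.2.1⟩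

/-- The product makes the Deligne path complex into a strict
differential graded algebra: (i) it maps `P^r × P^s` into `P^(r+s)`; (ii) it satisfies
the Leibniz rule; (iii) it is associative whenever the product on `V` is associative;
(iv) it is graded-commutative whenever the product on `V` is graded-commutative. -/
theorem mulP_strict_dga
    (V I F : ℤ → Submodule ℚ A) (d : A →ₗ[ℚ] A) (μ : A →ₗ[ℚ] A →ₗ[ℚ] A)
    (hd2 : ∀ a : A, d (d a) = 0)
    (hIV : ∀ n, I n ≤ V n) (hFV : ∀ n, F n ≤ V n)
    (hdV : ∀ n, ∀ a ∈ V n, d a ∈ V (n + 1))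
    (hdI : ∀ n, ∀ a ∈ I n, d a ∈ I (n + 1))
    (hdF : ∀ n, ∀ a ∈ F n, d a ∈ F (n + 1))
    (hgrade : ∀ (r s : ℤ), ∀ a ∈ V r, ∀ b ∈ V s, μ a b ∈ V (r + s))
    (hgradeI : ∀ (r s : ℤ), ∀ a ∈ I r, ∀ b ∈ I s, μ a b ∈ I (r + s))
    (hgradeF : ∀ (r s : ℤ), ∀ a ∈ F r, ∀ b ∈ F s, μ a b ∈ F (r + s))
    (hLeib : ∀ (r : ℤ), ∀ u ∈ V r, ∀ v : A,
      d (μ u v) = μ (d u) v + ((-1 : ℚ) ^ r) • μ u (d v)) :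
    -- (i) the product maps `P^r × P^s` into `P^(r+s)`
    (∀ (r s : ℤ) (w w' : (ℕ →₀ A) × (ℕ →₀ A)),
      MemP I F V r w → MemP I F V s w' → MemP I F V (r + s) (mulP μ r w w')) ∧
    -- (ii) Leibniz rule
    (∀ (r s : ℤ) (w w' : (ℕ →₀ A) × (ℕ →₀ A)),
      MemP I F V r w → MemP I F V s w' →
      dPath d (mulP μ r w w') =
        mulP μ (r + 1) (dPath d w) w' + ((-1 : ℚ) ^ r) • mulP μ r w (dPath d w')) ∧
    -- (iii) associativity, assuming the product on `V` is associative
    ((∀ a b c : A, μ (μ a b) c = μ a (μ b c)) →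
      ∀ (r s t : ℤ) (w w' w'' : (ℕ →₀ A) × (ℕ →₀ A)),
        MemP I F V r w → MemP I F V s w' → MemP I F V t w'' →
        mulP μ (r + s) (mulP μ r w w') w'' = mulP μ r w (mulP μ s w' w'')) ∧
    -- (iv) graded-commutativity, assuming the product on `V` is graded-commutative
    ((∀ (r s : ℤ), ∀ u ∈ V r, ∀ v ∈ V s, μ u v = ((-1 : ℚ) ^ (r * s)) • μ v u) →
      ∀ (r s : ℤ) (w w' : (ℕ →₀ A) × (ℕ →₀ A)),
        MemP I F V r w → MemP I F V s w' →
        mulP μ r w w' = ((-1 : ℚ) ^ (r * s)) • mulP μ s w' w) :=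
  mulP_strict_dga_general V I F d μ hgrade hgradeI hgradeF hLeib
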